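/- arXiv:2003.12959 — 2 statements merged into one kernel-verified Lean document; each statement's English description precedes it below -/
import Mathlib

section
/- For every positive integer n and every set U ⊆ ℤ^n with |U| = 2^(2^(n-1)) + 1, there exist three pairwise distinct points u, v, w ∈ U with d₁(u,w) = d₁(u,v) + d₁(v,w); consequently every general position set in ℤ^n has at most 2^(2^(n-1)) elements. -/
/-- The ℓ1 (graph) distance on the integer lattice ℤ^n. -/
def d1 {n : ℕ} (u v : Fin n → ℤ) : ℤ := ∑ i, |u i - v i|

/-- A set `S ⊆ ℤ^n` is a general position set if no three pairwise distinct
points of `S` lie on a common geodesic of the grid graph `P_∞^n`. -/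
def IsGPSet {n : ℕ} (S : Set (Fin n → ℤ)) : Prop :=
  ∀ u ∈ S, ∀ v ∈ S, ∀ w ∈ S, u ≠ v → u ≠ w → v ≠ w →
    d1 u w ≠ d1 u v + d1 v w

/-!
Order the points lexicographically and colour each pair `u < v` by the set of coordinates
`i ≥ 1` in which `v` is at least `u`. If `u < v < w` and the pairs `(u, v)`, `(v, w)` get the
same colour, then `v` lies coordinatewise between `u` and `w` (in coordinate `0` because of the
lexicographic order), so it lies on an ℓ1-geodesic from `u` to `w`. In a general position set
this never happens, and then a point is determined by the set of colours of the pairs ending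
at it; there are `2 ^ (n - 1)` colours, hence at most `2 ^ 2 ^ (n - 1)` points.
-/

open Finset

theorem Finset.card_le_two_pow_of_no_monochromatic_chain {α C : Type*} [LinearOrder α]
    [Fintype C] (s : Finset α) (c : α → α → C)
    (h : ∀ x ∈ s, ∀ y ∈ s, ∀ z ∈ s, x < y → y < z → c x y ≠ c y z) :
    #s ≤ 2 ^ Fintype.card C := by
  classical
  let incoming (y : α) : Finset C := {x ∈ s | x < y}.image (c · y)
  have hinj : Set.InjOn incoming s := by
    intro y hy z hz hyz
    by_contra hne
    wlog hlt : y < z generalizing y z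
    · exact this hz hy hyz.symm (Ne.symm hne) ((not_lt.1 hlt).lt_of_ne' hne)
    have : c y z ∈ incoming y := hyz ▸ mem_image_of_mem _ (mem_filter.2 ⟨hy, hlt⟩)
    obtain ⟨x, hx, hxy⟩ := mem_image.1 this
    exact h x (mem_filter.1 hx).1 y hy z hz (mem_filter.1 hx).2 hlt hxy
  calc #s ≤ #(univ : Finset (Finset C)) := card_le_card_of_injOn incoming (by simp) hinj
    _ = 2 ^ Fintype.card C := by rw [card_univ, Fintype.card_finset]

theorem abs_sub_eq_add_of_mem_uIcc {G : Type*} [AddCommGroup G] [LinearOrder G]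
    [IsOrderedAddMonoid G] {a b c : G} (h : b ∈ Set.uIcc a c) :
    |a - c| = |a - b| + |b - c| := by
  rw [← sub_add_sub_cancel a b c, abs_add_eq_add_abs_iff]
  rcases Set.mem_uIcc.1 h with ⟨hab, hbc⟩ | ⟨hcb, hba⟩
  · exact .inr ⟨sub_nonpos.2 hab, sub_nonpos.2 hbc⟩
  · exact .inl ⟨sub_nonneg.2 hba, sub_nonneg.2 hcb⟩

theorem d1_eq_add_of_forall_mem_uIcc {n : ℕ} {u v w : Fin n → ℤ}
    (h : ∀ i, v i ∈ Set.uIcc (u i) (w i)) : d1 u w = d1 u v + d1 v w := by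
  simp only [d1, ← sum_add_distrib]
  exact sum_congr rfl fun i _ => abs_sub_eq_add_of_mem_uIcc (h i)

theorem Pi.apply_bot_le_of_toLex_le {ι : Type*} [LinearOrder ι] [OrderBot ι] {β : ι → Type*}
    [∀ i, LinearOrder (β i)] {x y : ∀ i, β i} (h : toLex x ≤ toLex y) : x ⊥ ≤ y ⊥ :=
  Pi.apply_le_of_toLex h fun _ hj => absurd hj not_lt_bot

theorem d1_eq_add_of_toLex_lt_of_tail_iff {k : ℕ} {u v w : Fin (k + 1) → ℤ}
    (huv : toLex u < toLex v) (hvw : toLex v < toLex w)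
    (htail : ∀ j : Fin k, u j.succ ≤ v j.succ ↔ v j.succ ≤ w j.succ) :
    d1 u w = d1 u v + d1 v w := by
  refine d1_eq_add_of_forall_mem_uIcc fun i => Set.mem_uIcc.2 ?_
  cases i using Fin.cases with
  | zero => exact .inl ⟨Pi.apply_bot_le_of_toLex_le huv.le, Pi.apply_bot_le_of_toLex_le hvw.le⟩
  | succ j =>
    by_cases huvj : u j.succ ≤ v j.succ
    · exact .inl ⟨huvj, (htail j).1 huvj⟩
    · exact .inr ⟨(not_le.1 (mt (htail j).2 huvj)).le, (not_le.1 huvj).le⟩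

theorem IsGPSet.mono {n : ℕ} {S T : Set (Fin n → ℤ)} (hTS : T ⊆ S) (hS : IsGPSet S) :
    IsGPSet T :=
  fun u hu v hv w hw => hS u (hTS hu) v (hTS hv) w (hTS hw)

theorem IsGPSet.card_le {k : ℕ} {s : Finset (Fin (k + 1) → ℤ)}
    (hs : IsGPSet (s : Set (Fin (k + 1) → ℤ))) : #s ≤ 2 ^ 2 ^ k := by
  have := (s.map toLex.toEmbedding).card_le_two_pow_of_no_monochromatic_chain
    (fun a b => ({j | ofLex a j.succ ≤ ofLex b j.succ} : Finset (Fin k))) ?_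
  · simpa using this
  simp only [mem_map_equiv, toLex_symm_eq]
  intro u hu v hv w hw huv hvw hcol
  refine hs _ hu _ hv _ hw (ofLex.injective.ne huv.ne) (ofLex.injective.ne (huv.trans hvw).ne)
    (ofLex.injective.ne hvw.ne) (d1_eq_add_of_toLex_lt_of_tail_iff huv hvw fun j => ?_)
  simpa only [mem_filter, mem_univ, true_and] using Finset.ext_iff.1 hcol j

theorem not_isGPSet_of_encard_eq {k : ℕ} {U : Set (Fin (k + 1) → ℤ)}
    (hU : U.encard = 2 ^ 2 ^ k + 1) : ¬IsGPSet U := by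
  intro hgp
  have hU' : U.encard = (2 ^ 2 ^ k + 1 : ℕ) := by rw [hU]; norm_cast
  obtain ⟨t, rfl⟩ := (Set.finite_of_encard_eq_coe hU').exists_finset_coe
  rw [Set.encard_coe_eq_coe_finsetCard, Nat.cast_inj] at hU'
  have := hgp.card_le
  omega

theorem IsGPSet.encard_le {k : ℕ} {S : Set (Fin (k + 1) → ℤ)} (hS : IsGPSet S) :
    S.encard ≤ 2 ^ 2 ^ k := by
  by_contra! hlt
  obtain ⟨U, hUS, hU⟩ := Set.exists_subset_encard_eq (Order.add_one_le_of_lt hlt)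
  exact not_isGPSet_of_encard_eq hU (hS.mono hUS)

/-- Every set of `2^(2^(n-1)) + 1` points of `ℤ^n` contains three pairwise
distinct points lying on a common geodesic; consequently every general
position set of `ℤ^n` has at most `2^(2^(n-1))` elements. -/
theorem gp_upper_bound_of_integer_lattice (n : ℕ) (hn : 0 < n) :
    (∀ U : Set (Fin n → ℤ), U.encard = 2 ^ 2 ^ (n - 1) + 1 →
      ∃ u ∈ U, ∃ v ∈ U, ∃ w ∈ U, u ≠ v ∧ u ≠ w ∧ v ≠ w ∧
        d1 u w = d1 u v + d1 v w) ∧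
    (∀ S : Set (Fin n → ℤ), IsGPSet S → S.encard ≤ 2 ^ 2 ^ (n - 1)) := by
  obtain ⟨k, rfl⟩ := Nat.exists_eq_add_one_of_ne_zero hn.ne'
  refine ⟨fun U hU => ?_, fun S hS => hS.encard_le⟩
  simpa [IsGPSet] using not_isGPSet_of_encard_eq hU
end

section
/- For every n ≥ 2, the recursively constructed set X^(n) = {x_1^(n), …, x_{2^(2^(n-1))}^(n)} ⊆ ℤ^n (see context) consists of 2^(2^(n-1)) pairwise distinct points and is a general position set: no three pairwise distinct points u, v, w ∈ X^(n) satisfy d₁(u,w) = d₁(u,v) + d₁(v,w), where d₁(u,v) = ∑_{i=1}^n |u_i − v_i|. -/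
/-- `gridX n i j` is the `j`-th coordinate `x^(n)_{i,j}` (coordinates indexed
`1,…,n`) of the `i`-th point (indices `1,…,2^(2^(n-1))`) of the recursively
constructed general position set `X^(n) ⊆ ℤ^n`.

For `n = 2`: `x^(2)_1 = (1,2)`, `x^(2)_2 = (2,1)`, `x^(2)_3 = (3,4)`,
`x^(2)_4 = (4,3)`.

For `n ≥ 3`, writing `i = p·2^(2^(n-2)) + r` with `0 ≤ p < 2^(2^(n-2))` and
`1 ≤ r ≤ 2^(2^(n-2))`:
`x^(n)_{i,1} = i`;
`x^(n)_{i,j} = (x^(n-1)_{p+1,j} − 1)·2^(2^(n-2)) + x^(n-1)_{r,j}` for `2 ≤ j ≤ n−1`;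
`x^(n)_{i,n} = x^(n-1)_{p+1,n-1}·2^(2^(n-2)) − x^(n-1)_{r,n-1} + 1`. -/
def gridX : ℕ → ℕ → ℕ → ℤ
  | 0, _, _ => 0
  | 1, i, _ => (i : ℤ)
  | 2, i, j =>
      if j = 2 then (if i % 2 = 1 then (i : ℤ) + 1 else (i : ℤ) - 1) else (i : ℤ)
  | (n + 3), i, j =>
      let m : ℕ := 2 ^ 2 ^ (n + 1)
      let p : ℕ := (i - 1) / m
      let r : ℕ := (i - 1) % m + 1
      if j = 1 then (i : ℤ)
      else if j = n + 3 then
        gridX (n + 2) (p + 1) (n + 2) * (m : ℤ) - gridX (n + 2) r (n + 2) + 1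
      else
        (gridX (n + 2) (p + 1) j - 1) * (m : ℤ) + gridX (n + 2) r j

/-- The point `x_i^(n) ∈ ℤ^n` of the construction (coordinates `x^(n)_{i,1},…,x^(n)_{i,n}`). -/
def gridPt (n i : ℕ) : Fin n → ℤ := fun k => gridX n i (k.val + 1)

open Set

theorem abs_sub_eq_abs_sub_add_abs_sub_iff {α : Type*} [AddCommGroup α] [LinearOrder α]
    [IsOrderedAddMonoid α] {a b c : α} : |a - c| = |a - b| + |b - c| ↔ b ∈ uIcc a c := by
  have h := abs_add_eq_add_abs_iff (a - b) (b - c)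
  rw [sub_add_sub_cancel] at h
  rw [h, mem_uIcc, sub_nonneg, sub_nonneg, sub_nonpos, sub_nonpos]
  tauto

theorem d1_eq_add_iff {n : ℕ} {u v w : Fin n → ℤ} :
    d1 u w = d1 u v + d1 v w ↔ ∀ k, v k ∈ uIcc (u k) (w k) := by
  simp only [d1, ← Finset.sum_add_distrib, ← abs_sub_eq_abs_sub_add_abs_sub_iff]
  rw [Finset.sum_eq_sum_iff_of_le fun k _ ↦ abs_sub_le _ _ _]
  simp

-- The `B`-th entry of the `A`-th block of length `m` (all 1-based); `blockPosRev` counts `B`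
-- from the end of the block.
def blockPos {R : Type*} [Add R] [Mul R] [Sub R] [One R] (m A B : R) : R := (A - 1) * m + B

def blockPosRev (m A B : ℤ) : ℤ := A * m - B + 1

section Block

variable {m A A' A₁ A₂ A₃ B B' B₁ B₂ B₃ : ℤ}

theorem blockPos_lt_blockPos (hB : B ∈ Icc 1 m) (hB' : B' ∈ Icc 1 m) (h : A < A') :
    blockPos m A B < blockPos m A' B' := by
  obtain ⟨hB₁, hB₂⟩ := hB
  obtain ⟨hB'₁, hB'₂⟩ := hB'
  unfold blockPos
  nlinarith [mul_le_mul_of_nonneg_right (Int.add_one_le_iff.2 h) (by omega : (0 : ℤ) ≤ m)]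

theorem blockPosRev_lt_blockPosRev (hB : B ∈ Icc 1 m) (hB' : B' ∈ Icc 1 m) (h : A < A') :
    blockPosRev m A B < blockPosRev m A' B' := by
  obtain ⟨hB₁, hB₂⟩ := hB
  obtain ⟨hB'₁, hB'₂⟩ := hB'
  unfold blockPosRev
  nlinarith [mul_le_mul_of_nonneg_right (Int.add_one_le_iff.2 h) (by omega : (0 : ℤ) ≤ m)]

theorem blockPos_mem_Icc (hA : A ∈ Icc 1 m) (hB : B ∈ Icc 1 m) :
    blockPos m A B ∈ Icc 1 (m * m) := by
  obtain ⟨hA, hA'⟩ := hA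
  obtain ⟨hB, hB'⟩ := hB
  unfold blockPos
  constructor <;> nlinarith

theorem blockPosRev_mem_Icc (hA : A ∈ Icc 1 m) (hB : B ∈ Icc 1 m) :
    blockPosRev m A B ∈ Icc 1 (m * m) := by
  obtain ⟨hA, hA'⟩ := hA
  obtain ⟨hB, hB'⟩ := hB
  unfold blockPosRev
  constructor <;> nlinarith

theorem blockPosRev_inj (hB : B ∈ Icc 1 m) (hB' : B' ∈ Icc 1 m) :
    blockPosRev m A B = blockPosRev m A' B' ↔ A = A' ∧ B = B' := by
  refine ⟨fun h ↦ ?_, by rintro ⟨rfl, rfl⟩; rfl⟩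
  obtain rfl : A = A' := by
    by_contra hne
    rcases lt_or_gt_of_ne hne with hlt | hgt
    · exact (blockPosRev_lt_blockPosRev hB hB' hlt).ne h
    · exact (blockPosRev_lt_blockPosRev hB' hB hgt).ne' h
  exact ⟨rfl, by unfold blockPosRev at h; linarith⟩

theorem le_of_blockPos_le (hB : B ∈ Icc 1 m) (hB' : B' ∈ Icc 1 m)
    (h : blockPos m A B ≤ blockPos m A' B') : A ≤ A' :=
  not_lt.1 fun hlt ↦ h.not_gt (blockPos_lt_blockPos hB' hB hlt)

theorem mem_uIcc_of_blockPos_mem_uIcc (hB₁ : B₁ ∈ Icc 1 m) (hB₂ : B₂ ∈ Icc 1 m)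
    (hB₃ : B₃ ∈ Icc 1 m)
    (h : blockPos m A₂ B₂ ∈ uIcc (blockPos m A₁ B₁) (blockPos m A₃ B₃)) :
    A₂ ∈ uIcc A₁ A₃ := by
  rw [mem_uIcc] at h ⊢
  rcases h with ⟨h₁₂, h₂₃⟩ | ⟨h₃₂, h₂₁⟩
  · exact Or.inl ⟨le_of_blockPos_le hB₁ hB₂ h₁₂, le_of_blockPos_le hB₂ hB₃ h₂₃⟩
  · exact Or.inr ⟨le_of_blockPos_le hB₃ hB₂ h₃₂, le_of_blockPos_le hB₂ hB₁ h₂₁⟩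

theorem blockPos_mem_uIcc_blockPos_iff :
    blockPos m A B₂ ∈ uIcc (blockPos m A B₁) (blockPos m A B₃) ↔
      B₂ ∈ uIcc B₁ B₃ := by
  simp only [blockPos, mem_uIcc, add_le_add_iff_left]

-- Passing from block `A` to block `A'` moves both encodings the same way, while within
-- block `A` they move in opposite directions.
theorem eq_of_blockPos_mem_uIcc_of_blockPosRev_mem_uIcc (hB₁ : B₁ ∈ Icc 1 m)
    (hB₂ : B₂ ∈ Icc 1 m) (hB₃ : B₃ ∈ Icc 1 m) (hA : A ≠ A')
    (h : blockPos m A B₂ ∈ uIcc (blockPos m A B₁) (blockPos m A' B₃))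
    (h' : blockPosRev m A B₂ ∈ uIcc (blockPosRev m A B₁) (blockPosRev m A' B₃)) :
    B₁ = B₂ := by
  rw [mem_uIcc] at h h'
  rcases lt_or_gt_of_ne hA with hlt | hgt
  · have := blockPos_lt_blockPos hB₁ hB₃ hlt
    have := blockPos_lt_blockPos hB₂ hB₃ hlt
    have := blockPosRev_lt_blockPosRev hB₁ hB₃ hlt
    have := blockPosRev_lt_blockPosRev hB₂ hB₃ hlt
    unfold blockPos blockPosRev at *
    rcases h with ⟨_, _⟩ | ⟨_, _⟩ <;> rcases h' with ⟨_, _⟩ | ⟨_, _⟩ <;> linarith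
  · have := blockPos_lt_blockPos hB₃ hB₁ hgt
    have := blockPos_lt_blockPos hB₃ hB₂ hgt
    have := blockPosRev_lt_blockPosRev hB₃ hB₁ hgt
    have := blockPosRev_lt_blockPosRev hB₃ hB₂ hgt
    unfold blockPos blockPosRev at *
    rcases h with ⟨_, _⟩ | ⟨_, _⟩ <;> rcases h' with ⟨_, _⟩ | ⟨_, _⟩ <;> linarith

end Block

theorem exists_blockPos_eq {m i : ℕ} (hi : i ∈ Icc 1 (m * m)) :
    ∃ a ∈ Icc 1 m, ∃ b ∈ Icc 1 m, blockPos m a b = i := by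
  obtain ⟨hi₁, hi₂⟩ := hi
  have hm : 0 < m := Nat.pos_of_ne_zero (by rintro rfl; omega)
  refine ⟨(i - 1) / m + 1, ⟨le_add_self, ?_⟩, (i - 1) % m + 1,
    ⟨le_add_self, Nat.mod_lt _ hm⟩, ?_⟩
  · exact Nat.div_lt_of_lt_mul (by omega)
  · rw [blockPos, Nat.add_sub_cancel, ← add_assoc, Nat.div_add_mod', Nat.sub_add_cancel hi₁]

theorem blockPos_sub_one_div {m a b : ℕ} (hb : b ∈ Icc 1 m) :
    (blockPos m a b - 1) / m = a - 1 := by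
  obtain ⟨hb₁, hb₂⟩ := hb
  rw [blockPos, Nat.add_sub_assoc hb₁, add_comm, Nat.add_mul_div_right _ _ (by omega),
    Nat.div_eq_of_lt (by omega), zero_add]

theorem blockPos_sub_one_mod {m a b : ℕ} (hb : b ∈ Icc 1 m) :
    (blockPos m a b - 1) % m = b - 1 := by
  obtain ⟨hb₁, hb₂⟩ := hb
  rw [blockPos, Nat.add_sub_assoc hb₁, add_comm, Nat.add_mul_mod_self_right,
    Nat.mod_eq_of_lt (by omega)]

theorem Nat.cast_blockPos {m a b : ℕ} (ha : 1 ≤ a) :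
    ((blockPos m a b : ℕ) : ℤ) = blockPos (m : ℤ) a b := by
  simp [blockPos, Nat.cast_sub ha]

def gridSize (k : ℕ) : ℕ := 2 ^ 2 ^ (k - 1)

theorem gridSize_add_three (k : ℕ) : gridSize (k + 3) = gridSize (k + 2) * gridSize (k + 2) := by
  rw [gridSize, gridSize, ← pow_add, ← two_mul, ← pow_succ']
  rfl

theorem gridX_one (k i : ℕ) : gridX (k + 2) i 1 = i := by
  cases k <;> rfl

theorem gridX_add_three (k i j : ℕ) :
    gridX (k + 3) i j =
      if j = 1 then (i : ℤ)
      else if j = k + 3 then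
        blockPosRev (gridSize (k + 2) : ℤ)
          (gridX (k + 2) ((i - 1) / gridSize (k + 2) + 1) (k + 2))
          (gridX (k + 2) ((i - 1) % gridSize (k + 2) + 1) (k + 2))
      else
        blockPos (gridSize (k + 2) : ℤ) (gridX (k + 2) ((i - 1) / gridSize (k + 2) + 1) j)
          (gridX (k + 2) ((i - 1) % gridSize (k + 2) + 1) j) :=
  rfl

def GridBtw (k i₁ i₂ i₃ : ℕ) : Prop :=
  ∀ j ∈ Icc 1 k, gridX k i₂ j ∈ uIcc (gridX k i₁ j) (gridX k i₃ j)

theorem GridBtw.symm {k i₁ i₂ i₃ : ℕ} (h : GridBtw k i₁ i₂ i₃) : GridBtw k i₃ i₂ i₁ :=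
  fun j hj ↦ uIcc_comm (gridX k i₁ j) _ ▸ h j hj

structure GridInvariant (k : ℕ) : Prop where
  gridX_mem_Icc :
    ∀ i ∈ Icc 1 (gridSize k), ∀ j ∈ Icc 1 k, gridX k i j ∈ Icc 1 (gridSize k : ℤ)
  injOn_last : InjOn (gridX k · k) (Icc 1 (gridSize k))
  not_gridBtw :
    ∀ i₁ ∈ Icc 1 (gridSize k), ∀ i₂ ∈ Icc 1 (gridSize k), ∀ i₃ ∈ Icc 1 (gridSize k),
      i₁ ≠ i₂ → i₁ ≠ i₃ → i₂ ≠ i₃ → ¬ GridBtw k i₁ i₂ i₃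

theorem gridInvariant_two : GridInvariant 2 where
  gridX_mem_Icc := by
    simp only [← Finset.coe_Icc, Finset.mem_coe]
    decide
  injOn_last := by
    simp only [InjOn, ← Finset.coe_Icc, Finset.mem_coe]
    decide
  not_gridBtw := by
    simp only [GridBtw, ← Finset.coe_Icc, Finset.mem_coe, mem_uIcc]
    decide

section Step

variable {k a a' a₁ a₂ a₃ b b₁ b₂ b₃ j : ℕ}

theorem gridX_add_three_blockPos (ha : 1 ≤ a) (hb : b ∈ Icc 1 (gridSize (k + 2))) (hj : 1 ≤ j)
    (hjk : j ≠ k + 3) :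
    gridX (k + 3) (blockPos (gridSize (k + 2)) a b) j =
      blockPos (gridSize (k + 2) : ℤ) (gridX (k + 2) a j) (gridX (k + 2) b j) := by
  rcases eq_or_ne j 1 with rfl | hj1
  · rw [gridX_one (k + 1), gridX_one, gridX_one, Nat.cast_blockPos ha]
  · rw [gridX_add_three, if_neg hj1, if_neg hjk, blockPos_sub_one_div hb, blockPos_sub_one_mod hb,
      Nat.sub_add_cancel ha, Nat.sub_add_cancel hb.1]

theorem gridX_add_three_blockPos_last (ha : 1 ≤ a) (hb : b ∈ Icc 1 (gridSize (k + 2))) :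
    gridX (k + 3) (blockPos (gridSize (k + 2)) a b) (k + 3) =
      blockPosRev (gridSize (k + 2) : ℤ) (gridX (k + 2) a (k + 2)) (gridX (k + 2) b (k + 2)) := by
  rw [gridX_add_three, if_neg (by omega), if_pos rfl, blockPos_sub_one_div hb,
    blockPos_sub_one_mod hb, Nat.sub_add_cancel ha, Nat.sub_add_cancel hb.1]

theorem gridBtw_of_gridBtw_add_three_of_eq (ha : 1 ≤ a)
    (hb₁ : b₁ ∈ Icc 1 (gridSize (k + 2))) (hb₂ : b₂ ∈ Icc 1 (gridSize (k + 2)))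
    (hb₃ : b₃ ∈ Icc 1 (gridSize (k + 2)))
    (h : GridBtw (k + 3) (blockPos (gridSize (k + 2)) a b₁) (blockPos (gridSize (k + 2)) a b₂)
      (blockPos (gridSize (k + 2)) a b₃)) :
    GridBtw (k + 2) b₁ b₂ b₃ := by
  intro j hj
  have hj₂ : j ≤ k + 2 := hj.2
  have := h j ⟨hj.1, by omega⟩
  rwa [gridX_add_three_blockPos ha hb₁ hj.1 (by omega),
    gridX_add_three_blockPos ha hb₂ hj.1 (by omega),
    gridX_add_three_blockPos ha hb₃ hj.1 (by omega), blockPos_mem_uIcc_blockPos_iff] at this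

namespace GridInvariant

theorem gridBtw_of_gridBtw_add_three (hk : GridInvariant (k + 2)) (ha₁ : 1 ≤ a₁) (ha₂ : 1 ≤ a₂)
    (ha₃ : 1 ≤ a₃) (hb₁ : b₁ ∈ Icc 1 (gridSize (k + 2)))
    (hb₂ : b₂ ∈ Icc 1 (gridSize (k + 2))) (hb₃ : b₃ ∈ Icc 1 (gridSize (k + 2)))
    (h : GridBtw (k + 3) (blockPos (gridSize (k + 2)) a₁ b₁)
      (blockPos (gridSize (k + 2)) a₂ b₂) (blockPos (gridSize (k + 2)) a₃ b₃)) :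
    GridBtw (k + 2) a₁ a₂ a₃ := by
  intro j hj
  have hj₂ : j ≤ k + 2 := hj.2
  have := h j ⟨hj.1, by omega⟩
  rw [gridX_add_three_blockPos ha₁ hb₁ hj.1 (by omega),
    gridX_add_three_blockPos ha₂ hb₂ hj.1 (by omega),
    gridX_add_three_blockPos ha₃ hb₃ hj.1 (by omega)] at this
  exact mem_uIcc_of_blockPos_mem_uIcc (hk.gridX_mem_Icc _ hb₁ j hj)
    (hk.gridX_mem_Icc _ hb₂ j hj) (hk.gridX_mem_Icc _ hb₃ j hj) this

theorem eq_of_gridBtw_add_three (hk : GridInvariant (k + 2)) (ha : a ∈ Icc 1 (gridSize (k + 2)))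
    (ha' : a' ∈ Icc 1 (gridSize (k + 2))) (haa' : a ≠ a')
    (hb₁ : b₁ ∈ Icc 1 (gridSize (k + 2)))
    (hb₂ : b₂ ∈ Icc 1 (gridSize (k + 2))) (hb₃ : b₃ ∈ Icc 1 (gridSize (k + 2)))
    (h : GridBtw (k + 3) (blockPos (gridSize (k + 2)) a b₁) (blockPos (gridSize (k + 2)) a b₂)
      (blockPos (gridSize (k + 2)) a' b₃)) :
    b₁ = b₂ := by
  have hlow := h (k + 2) ⟨by omega, by omega⟩
  have hhigh := h (k + 3) ⟨by omega, le_rfl⟩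
  rw [gridX_add_three_blockPos ha.1 hb₁ (by omega) (by omega),
    gridX_add_three_blockPos ha.1 hb₂ (by omega) (by omega),
    gridX_add_three_blockPos ha'.1 hb₃ (by omega) (by omega)] at hlow
  rw [gridX_add_three_blockPos_last ha.1 hb₁, gridX_add_three_blockPos_last ha.1 hb₂,
    gridX_add_three_blockPos_last ha'.1 hb₃] at hhigh
  have hj : k + 2 ∈ Icc 1 (k + 2) := ⟨by omega, le_rfl⟩
  exact hk.injOn_last hb₁ hb₂ (eq_of_blockPos_mem_uIcc_of_blockPosRev_mem_uIcc
    (hk.gridX_mem_Icc _ hb₁ _ hj) (hk.gridX_mem_Icc _ hb₂ _ hj) (hk.gridX_mem_Icc _ hb₃ _ hj)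
    (fun e ↦ haa' (hk.injOn_last ha ha' e)) hlow hhigh)

theorem not_gridBtw_add_three (hk : GridInvariant (k + 2)) :
    ∀ i₁ ∈ Icc 1 (gridSize (k + 3)), ∀ i₂ ∈ Icc 1 (gridSize (k + 3)),
      ∀ i₃ ∈ Icc 1 (gridSize (k + 3)), i₁ ≠ i₂ → i₁ ≠ i₃ → i₂ ≠ i₃ →
        ¬ GridBtw (k + 3) i₁ i₂ i₃ := by
  intro i₁ hi₁ i₂ hi₂ i₃ hi₃ h₁₂ h₁₃ h₂₃ h
  rw [gridSize_add_three] at hi₁ hi₂ hi₃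
  obtain ⟨a₁, ha₁, b₁, hb₁, rfl⟩ := exists_blockPos_eq hi₁
  obtain ⟨a₂, ha₂, b₂, hb₂, rfl⟩ := exists_blockPos_eq hi₂
  obtain ⟨a₃, ha₃, b₃, hb₃, rfl⟩ := exists_blockPos_eq hi₃
  have hA := hk.gridBtw_of_gridBtw_add_three ha₁.1 ha₂.1 ha₃.1 hb₁ hb₂ hb₃ h
  by_cases ha₁₂ : a₁ = a₂ <;> by_cases ha₂₃ : a₂ = a₃
  · subst ha₁₂ ha₂₃
    refine hk.not_gridBtw b₁ hb₁ b₂ hb₂ b₃ hb₃ ?_ ?_ ?_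
      (gridBtw_of_gridBtw_add_three_of_eq ha₁.1 hb₁ hb₂ hb₃ h)
    all_goals rintro rfl; contradiction
  · subst ha₁₂
    exact h₁₂ (by rw [hk.eq_of_gridBtw_add_three ha₁ ha₃ ha₂₃ hb₁ hb₂ hb₃ h])
  · subst ha₂₃
    exact h₂₃ (by
      rw [hk.eq_of_gridBtw_add_three ha₂ ha₁ (Ne.symm ha₁₂) hb₃ hb₂ hb₁ h.symm])
  · -- Coordinate 1 is the index itself, so `a₁ = a₃` would force `a₂ = a₁`.
    have ha₁₃ : a₁ ≠ a₃ := by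
      rintro rfl
      have := hA 1 ⟨le_rfl, by omega⟩
      rw [gridX_one, gridX_one, uIcc_self, mem_singleton_iff, Nat.cast_inj] at this
      exact ha₁₂ this.symm
    exact hk.not_gridBtw a₁ ha₁ a₂ ha₂ a₃ ha₃ ha₁₂ ha₁₃ ha₂₃ hA

theorem add_three (hk : GridInvariant (k + 2)) : GridInvariant (k + 3) where
  gridX_mem_Icc := by
    intro i hi j hj
    rw [gridSize_add_three] at hi ⊢
    push_cast
    obtain ⟨a, ha, b, hb, rfl⟩ := exists_blockPos_eq hi
    rcases eq_or_ne j (k + 3) with rfl | hjk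
    · have hj : k + 2 ∈ Icc 1 (k + 2) := ⟨by omega, le_rfl⟩
      rw [gridX_add_three_blockPos_last ha.1 hb]
      exact blockPosRev_mem_Icc (hk.gridX_mem_Icc a ha _ hj) (hk.gridX_mem_Icc b hb _ hj)
    · have hj : j ∈ Icc 1 (k + 2) := ⟨hj.1, by have := hj.2; omega⟩
      rw [gridX_add_three_blockPos ha.1 hb hj.1 hjk]
      exact blockPos_mem_Icc (hk.gridX_mem_Icc a ha _ hj) (hk.gridX_mem_Icc b hb _ hj)
  injOn_last := by
    intro i hi i' hi' h
    rw [gridSize_add_three] at hi hi'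
    obtain ⟨a, ha, b, hb, rfl⟩ := exists_blockPos_eq hi
    obtain ⟨a', ha', b', hb', rfl⟩ := exists_blockPos_eq hi'
    have hj : k + 2 ∈ Icc 1 (k + 2) := ⟨by omega, le_rfl⟩
    simp only [gridX_add_three_blockPos_last ha.1 hb, gridX_add_three_blockPos_last ha'.1 hb'] at h
    obtain ⟨hA, hB⟩ :=
      (blockPosRev_inj (hk.gridX_mem_Icc b hb _ hj) (hk.gridX_mem_Icc b' hb' _ hj)).1 h
    rw [hk.injOn_last ha ha' hA, hk.injOn_last hb hb' hB]
  not_gridBtw := hk.not_gridBtw_add_three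

end GridInvariant

end Step

theorem gridInvariant : ∀ k, GridInvariant (k + 2)
  | 0 => gridInvariant_two
  | k + 1 => (gridInvariant k).add_three

theorem gridPt_injective (k : ℕ) : Function.Injective (gridPt (k + 2)) := fun i i' h ↦ by
  have := congrFun h 0
  simp only [gridPt, Fin.val_zero, zero_add, gridX_one, Nat.cast_inj] at this
  exact this

theorem gridBtw_of_d1_eq {k i₁ i₂ i₃ : ℕ}
    (h : d1 (gridPt k i₁) (gridPt k i₃) =
      d1 (gridPt k i₁) (gridPt k i₂) + d1 (gridPt k i₂) (gridPt k i₃)) :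
    GridBtw k i₁ i₂ i₃ := by
  intro j ⟨hj₁, hj₂⟩
  have := d1_eq_add_iff.1 h ⟨j - 1, by omega⟩
  rwa [gridPt, gridPt, gridPt, Nat.sub_add_cancel hj₁] at this

/-- For every `n ≥ 2`, the set `X^(n) = {x_1^(n), …, x_{2^(2^(n-1))}^(n)}`
consists of `2^(2^(n-1))` pairwise distinct points of `ℤ^n` and is a general
position set: no three pairwise distinct of its points lie on a common geodesic. -/
theorem gridX_is_general_position (n : ℕ) (hn : 2 ≤ n) :
    (gridPt n '' Set.Icc 1 (2 ^ 2 ^ (n - 1))).encard = 2 ^ 2 ^ (n - 1) ∧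
    ∀ u ∈ gridPt n '' Set.Icc 1 (2 ^ 2 ^ (n - 1)),
      ∀ v ∈ gridPt n '' Set.Icc 1 (2 ^ 2 ^ (n - 1)),
        ∀ w ∈ gridPt n '' Set.Icc 1 (2 ^ 2 ^ (n - 1)),
          u ≠ v → u ≠ w → v ≠ w → d1 u w ≠ d1 u v + d1 v w := by
  obtain ⟨k, rfl⟩ := Nat.exists_eq_add_of_le' hn
  refine ⟨?_, ?_⟩
  · rw [(gridPt_injective k).injOn.encard_image, ← Finset.coe_Icc, encard_coe_eq_coe_finsetCard,
      Nat.card_Icc, Nat.add_sub_cancel]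
    norm_num
  · rintro _ ⟨i₁, hi₁, rfl⟩ _ ⟨i₂, hi₂, rfl⟩ _ ⟨i₃, hi₃, rfl⟩ h₁₂ h₁₃ h₂₃ h
    exact (gridInvariant k).not_gridBtw i₁ hi₁ i₂ hi₂ i₃ hi₃ (ne_of_apply_ne _ h₁₂)
      (ne_of_apply_ne _ h₁₃) (ne_of_apply_ne _ h₂₃) (gridBtw_of_d1_eq h)
end
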